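/- arXiv:1812.10770 — 3 statements merged into one kernel-verified Lean document; each statement's English description precedes it below -/
import Mathlib

section
/- Let μ be the product measure of two independent standard Gaussian measures on ℝ (i.e., (gaussianReal 0 1).prod (gaussianReal 0 1) on ℝ × ℝ). Then the pushforward of μ under the map (x, y) ↦ Complex.arg(x + y·I) is the uniform probability measure on the interval (−π, π] (i.e., (1/(2π)) times Lebesgue measure restricted to (−π, π]). -/
open Real MeasureTheory ProbabilityTheory Set

/-- Change of variables in polar coordinates, Lebesgue integral version. -/
theorem my_lintegral_comp_polarCoord_symm (f : ℝ × ℝ → ENNReal) :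
    (∫⁻ p in polarCoord.target, ENNReal.ofReal p.1 * f (polarCoord.symm p)) = ∫⁻ p, f p := by
  set B : ℝ × ℝ → ℝ × ℝ →L[ℝ] ℝ × ℝ := fun p =>
    LinearMap.toContinuousLinearMap (Matrix.toLin (Module.Basis.finTwoProd ℝ) (Module.Basis.finTwoProd ℝ)
      !![cos p.2, -p.1 * sin p.2; sin p.2, p.1 * cos p.2])
  have A : ∀ p ∈ polarCoord.target,
      HasFDerivWithinAt polarCoord.symm (B p) polarCoord.target p := fun p _ =>
    (hasFDerivAt_polarCoord_symm p).hasFDerivWithinAt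
  have B_det : ∀ p, (B p).det = p.1 := by
    intro p
    conv_rhs => rw [← one_mul p.1, ← cos_sq_add_sin_sq p.2]
    simp only [B, neg_mul, LinearMap.det_toContinuousLinearMap, LinearMap.det_toLin,
      Matrix.det_fin_two_of, sub_neg_eq_add]
    ring
  symm
  calc
    ∫⁻ p, f p = ∫⁻ p in polarCoord.source, f p := by
      rw [← setLIntegral_univ]
      exact (setLIntegral_congr polarCoord_source_ae_eq_univ).symm
    _ = ∫⁻ p in polarCoord.symm '' polarCoord.target, f p := by
      rw [polarCoord.symm_image_target_eq_source]
    _ = ∫⁻ p in polarCoord.target, ENNReal.ofReal |(B p).det| * f (polarCoord.symm p) := by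
      exact lintegral_image_eq_lintegral_abs_det_fderiv_mul volume
        polarCoord.open_target.measurableSet A
        (polarCoord.symm.injOn) f
    _ = ∫⁻ p in polarCoord.target, ENNReal.ofReal p.1 * f (polarCoord.symm p) := by
      refine setLIntegral_congr_fun polarCoord.open_target.measurableSet
        (fun x hx => ?_)
      rw [B_det, abs_of_pos hx.1]

lemma gauss_pdf_polar (r θ : ℝ) :
    gaussianPDFReal 0 1 (r * cos θ) * gaussianPDFReal 0 1 (r * sin θ)
      = (2 * π)⁻¹ * rexp (-(r ^ 2) / 2) := by
  simp only [gaussianPDFReal, NNReal.coe_one, mul_one, sub_zero]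
  have h2π : (0 : ℝ) ≤ 2 * π := by positivity
  have hsq : (√(2 * π))⁻¹ * (√(2 * π))⁻¹ = (2 * π)⁻¹ := by
    rw [← mul_inv, Real.mul_self_sqrt h2π]
  have hexp : rexp (-(r * cos θ) ^ 2 / 2) * rexp (-(r * sin θ) ^ 2 / 2)
      = rexp (-(r ^ 2) / 2) := by
    rw [← Real.exp_add]
    congr 1
    have := sin_sq_add_cos_sq θ
    nlinarith [this]
  calc (√(2 * π))⁻¹ * rexp (-(r * cos θ) ^ 2 / 2) *
        ((√(2 * π))⁻¹ * rexp (-(r * sin θ) ^ 2 / 2))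
      = (√(2 * π))⁻¹ * (√(2 * π))⁻¹ *
        (rexp (-(r * cos θ) ^ 2 / 2) * rexp (-(r * sin θ) ^ 2 / 2)) := by ring
    _ = (2 * π)⁻¹ * rexp (-(r ^ 2) / 2) := by rw [hsq, hexp]

lemma integral_radial : ∫ r in Ioi (0 : ℝ), r * rexp (-(r ^ 2) / 2) = 1 := by
  have hderiv : ∀ x ∈ Ici (0 : ℝ),
      HasDerivAt (fun x : ℝ => -rexp (-(x ^ 2) / 2)) (x * rexp (-(x ^ 2) / 2)) x := by
    intro x _
    have h1 : HasDerivAt (fun x : ℝ => -(x ^ 2) / 2) (-x) x := by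
      have := ((hasDerivAt_pow 2 x).neg).div_const 2
      exact this.congr_deriv (by norm_num; ring)
    have := (h1.exp).neg
    exact this.congr_deriv (by ring)
  have hint : IntegrableOn (fun x : ℝ => x * rexp (-(x ^ 2) / 2)) (Ioi 0) := by
    have h0 := integrableOn_rpow_mul_exp_neg_mul_sq one_half_pos
      (by norm_num : (-1:ℝ) < 1)
    refine h0.congr_fun (fun x _ => ?_) measurableSet_Ioi
    dsimp only; rw [Real.rpow_one]; ring_nf
  have htend : Filter.Tendsto (fun x : ℝ => -rexp (-(x ^ 2) / 2)) Filter.atTop (nhds 0) := by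
    rw [← neg_zero]
    refine Filter.Tendsto.neg ?_
    apply Real.tendsto_exp_atBot.comp
    apply Filter.Tendsto.atBot_div_const two_pos
    exact Filter.tendsto_neg_atTop_atBot.comp (Filter.tendsto_pow_atTop two_ne_zero)
  have := integral_Ioi_of_hasDerivAt_of_tendsto
    (((Real.continuous_exp.comp (by continuity)).neg).continuousWithinAt)
    (fun x hx => hderiv x (Set.mem_Ici.mpr (le_of_lt hx))) hint htend
  simpa using this

lemma gaussian_prod_eq_withDensity :
    (gaussianReal 0 1).prod (gaussianReal 0 1)
      = (volume.prod volume).withDensity fun p => gaussianPDF 0 1 p.1 * gaussianPDF 0 1 p.2 := by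
  have hpb : IsProbabilityMeasure (volume.withDensity (gaussianPDF 0 1)) := by
    rw [← gaussianReal_of_var_ne_zero 0 one_ne_zero]; infer_instance
  rw [gaussianReal_of_var_ne_zero 0 one_ne_zero]
  refine Measure.prod_eq fun s t hs ht => ?_
  rw [withDensity_apply _ (hs.prod ht), ← Measure.prod_restrict,
    lintegral_prod_mul (measurable_gaussianPDF 0 1).aemeasurable
      (measurable_gaussianPDF 0 1).aemeasurable,
    withDensity_apply _ hs, withDensity_apply _ ht]

/-- The argument of a standard 2-dimensional Gaussian vector is uniformly
distributed on `(−π, π]`. -/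
theorem map_arg_gaussian_eq_uniform :
    Measure.map (fun p : ℝ × ℝ => Complex.arg (p.1 + p.2 * Complex.I))
        ((gaussianReal 0 1).prod (gaussianReal 0 1))
      = (ENNReal.ofReal (2 * π))⁻¹ • volume.restrict (Set.Ioc (-π) π) := by
  set T : ℝ × ℝ → ℝ := fun p => Complex.arg (p.1 + p.2 * Complex.I) with hTdef
  have hT : Measurable T := by
    apply Complex.measurable_arg.comp
    fun_prop
  ext s hs
  rw [Measure.map_apply hT hs, gaussian_prod_eq_withDensity,
    withDensity_apply _ (hT hs), ← lintegral_indicator (hT hs)]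
  have hind : (T ⁻¹' s).indicator (fun p => gaussianPDF 0 1 p.1 * gaussianPDF 0 1 p.2)
      = fun p => s.indicator (fun _ => (1 : ENNReal)) (T p)
        * (gaussianPDF 0 1 p.1 * gaussianPDF 0 1 p.2) := by
    funext p
    by_cases h : T p ∈ s
    · rw [Set.indicator_of_mem (by exact h) , Set.indicator_of_mem h, one_mul]
    · rw [Set.indicator_of_notMem (by exact h), Set.indicator_of_notMem h, zero_mul]
  rw [hind, ← Measure.volume_eq_prod, ← my_lintegral_comp_polarCoord_symm]
  have hcongr : (∫⁻ p in polarCoord.target, ENNReal.ofReal p.1 *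
      (s.indicator (fun _ => (1 : ENNReal)) (T (polarCoord.symm p))
        * (gaussianPDF 0 1 (polarCoord.symm p).1 * gaussianPDF 0 1 (polarCoord.symm p).2)))
      = ∫⁻ p in polarCoord.target,
        (fun r => ENNReal.ofReal ((2 * π)⁻¹ * (r * rexp (-(r ^ 2) / 2)))) p.1
          * (fun θ => s.indicator (fun _ => (1 : ENNReal)) θ) p.2 := by
    refine setLIntegral_congr_fun polarCoord.open_target.measurableSet
      (fun p hp => ?_)
    obtain ⟨hp1, hp2⟩ := hp
    simp only [polarCoord_target, mem_Ioi, mem_Ioo] at hp1 hp2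
    have hsymm : polarCoord.symm p = (p.1 * cos p.2, p.1 * sin p.2) := rfl
    have hTval : T (polarCoord.symm p) = p.2 := by
      rw [hsymm, hTdef]
      have : ((p.1 * cos p.2 : ℝ) : ℂ) + (p.1 * sin p.2 : ℝ) * Complex.I
          = (p.1 : ℂ) * ((cos p.2 : ℝ) + (sin p.2 : ℝ) * Complex.I) := by
        push_cast; ring
      simp only [this]
      rw [Complex.arg_real_mul _ hp1, Complex.ofReal_cos, Complex.ofReal_sin,
        Complex.arg_cos_add_sin_mul_I ⟨hp2.1, le_of_lt hp2.2⟩]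
    have hpdf : gaussianPDF 0 1 (polarCoord.symm p).1 * gaussianPDF 0 1 (polarCoord.symm p).2
        = ENNReal.ofReal ((2 * π)⁻¹ * rexp (-(p.1 ^ 2) / 2)) := by
      rw [hsymm]
      simp only [gaussianPDF]
      rw [← ENNReal.ofReal_mul (gaussianPDFReal_nonneg 0 1 _), gauss_pdf_polar]
    rw [hTval, hpdf, mul_comm (s.indicator (fun _ => (1 : ENNReal)) p.2), ← mul_assoc,
      ← ENNReal.ofReal_mul (le_of_lt hp1),
      show p.1 * ((2 * π)⁻¹ * rexp (-p.1 ^ 2 / 2))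
        = (2 * π)⁻¹ * (p.1 * rexp (-p.1 ^ 2 / 2)) from by ring]
  rw [hcongr, polarCoord_target, Measure.volume_eq_prod, ← Measure.prod_restrict,
    lintegral_prod_mul (f := fun r => ENNReal.ofReal ((2 * π)⁻¹ * (r * rexp (-r ^ 2 / 2))))
      (g := fun θ => s.indicator (fun _ => (1 : ENNReal)) θ) (by fun_prop)
      (measurable_const.indicator hs).aemeasurable]
  have hfst : (∫⁻ r in Ioi (0 : ℝ), ENNReal.ofReal ((2 * π)⁻¹ * (r * rexp (-(r ^ 2) / 2))))
      = ENNReal.ofReal (2 * π)⁻¹ := by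
    rw [← ofReal_integral_eq_lintegral_ofReal]
    · rw [MeasureTheory.integral_const_mul, integral_radial, mul_one]
    · apply Integrable.const_mul
      have h0 := integrableOn_rpow_mul_exp_neg_mul_sq one_half_pos
        (by norm_num : (-1:ℝ) < 1)
      refine h0.congr_fun (fun x _ => ?_) measurableSet_Ioi
      dsimp only; rw [Real.rpow_one]; ring_nf
    · filter_upwards [ae_restrict_mem measurableSet_Ioi] with x hx
      have : (0:ℝ) < x := hx
      positivity
  have hsnd : (∫⁻ θ in Ioo (-π) π, s.indicator (fun _ => (1 : ENNReal)) θ)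
      = volume (s ∩ Ioc (-π) π) := by
    rw [show (fun _ : ℝ => (1 : ENNReal)) = (1 : ℝ → ENNReal) from rfl,
      lintegral_indicator_one hs, Measure.restrict_apply hs]
    exact measure_congr (ae_eq_set_inter (Filter.EventuallyEq.refl _ _) Ioo_ae_eq_Ioc)
  rw [hfst, hsnd, Measure.smul_apply, Measure.restrict_apply hs, smul_eq_mul,
    ENNReal.ofReal_inv_of_pos (by positivity)]
end

section
/- Let r ∈ ℝ with −1 < r < 1, and define g(r, ν) = (1/(2π))·(ν + r·sin ν·arccos(−r·cos ν)/√(1 − r²·cos²ν)). Then for all real a ≤ b, ∫_a^b g(r, ν) dν = (b² − a²)/(4π) − (1/(4π))·(arccos(−r·cos b)² − arccos(−r·cos a)²). -/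
/-! Since `2 arccos u · arccos' u = -2 arccos u / √(1 - u²)`, the chain rule with `u = -r cos ν`
shows that `ν ↦ ν² / (4π) - arccos (-r cos ν)² / (4π)` is an antiderivative of `g(r, ·)`;
the hypothesis `|r| < 1` keeps `u` away from `±1`, where `arccos` is not differentiable. -/

open Real

/-- The cumulative distribution function of the angle difference for two discs
correlated by `r`. -/
noncomputable def gFun (r ν : ℝ) : ℝ :=
  (1 / (2 * π)) * (ν + r * Real.sin ν * Real.arccos (-r * Real.cos ν) /
    Real.sqrt (1 - r ^ 2 * (Real.cos ν) ^ 2))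

section

variable {r : ℝ}

lemma sq_mul_cos_sq_lt_one (hr : |r| < 1) (ν : ℝ) : r ^ 2 * Real.cos ν ^ 2 < 1 := by
  have hr2 : r ^ 2 < 1 := (sq_lt_one_iff_abs_lt_one r).mpr hr
  nlinarith [Real.cos_sq_le_one ν, sq_nonneg r]

lemma sqrt_one_sub_sq_mul_cos_sq_ne_zero (hr : |r| < 1) (ν : ℝ) :
    Real.sqrt (1 - r ^ 2 * Real.cos ν ^ 2) ≠ 0 :=
  (Real.sqrt_pos.mpr (by linarith [sq_mul_cos_sq_lt_one hr ν])).ne'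

lemma hasDerivAt_arccos_neg_mul_cos (hr : |r| < 1) (ν : ℝ) :
    HasDerivAt (fun x => Real.arccos (-r * Real.cos x))
      (-(r * Real.sin ν) / Real.sqrt (1 - r ^ 2 * Real.cos ν ^ 2)) ν := by
  have hu : (-r * Real.cos ν) ^ 2 = r ^ 2 * Real.cos ν ^ 2 := by ring
  have hsq : (-r * Real.cos ν) ^ 2 < 1 := hu ▸ sq_mul_cos_sq_lt_one hr ν
  obtain ⟨hlo, hhi⟩ := abs_lt.mp ((sq_lt_one_iff_abs_lt_one _).mp hsq)
  refine ((Real.hasDerivAt_arccos hlo.ne' hhi.ne).comp ν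
    ((Real.hasDerivAt_cos ν).const_mul (-r))).congr_deriv ?_
  rw [hu]
  ring

lemma hasDerivAt_gFun_primitive (hr : |r| < 1) (ν : ℝ) :
    HasDerivAt (fun x => x ^ 2 / (4 * π) - 1 / (4 * π) * Real.arccos (-r * Real.cos x) ^ 2)
      (gFun r ν) ν := by
  have hsqrt := sqrt_one_sub_sq_mul_cos_sq_ne_zero hr ν
  refine (((hasDerivAt_pow 2 ν).div_const (4 * π)).sub
    (((hasDerivAt_arccos_neg_mul_cos hr ν).pow 2).const_mul (1 / (4 * π)))).congr_deriv ?_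
  unfold gFun
  field_simp
  ring

lemma continuous_gFun (hr : |r| < 1) : Continuous (gFun r) := by
  unfold gFun
  exact continuous_const.mul (continuous_id.add
    (Continuous.div (by fun_prop) (by fun_prop) (sqrt_one_sub_sq_mul_cos_sq_ne_zero hr)))

end

theorem integral_gFun_general (r : ℝ) (hr₁ : -1 < r) (hr₂ : r < 1) (a b : ℝ) :
    ∫ ν in a..b, gFun r ν =
      (b ^ 2 - a ^ 2) / (4 * π) -
        (1 / (4 * π)) *
          ((Real.arccos (-r * Real.cos b)) ^ 2 - (Real.arccos (-r * Real.cos a)) ^ 2) := by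
  have hr : |r| < 1 := abs_lt.mpr ⟨hr₁, hr₂⟩
  rw [intervalIntegral.integral_eq_sub_of_hasDerivAt (fun x _ => hasDerivAt_gFun_primitive hr x)
    ((continuous_gFun hr).intervalIntegrable a b)]
  ring

/-- Integral of `g(r, ·)` over an interval `[a, b]`. -/
theorem integral_gFun (r : ℝ) (hr₁ : -1 < r) (hr₂ : r < 1) (a b : ℝ) (hab : a ≤ b) :
    ∫ ν in a..b, gFun r ν =
      (b ^ 2 - a ^ 2) / (4 * π) -
        (1 / (4 * π)) *
          ((Real.arccos (-r * Real.cos b)) ^ 2 - (Real.arccos (-r * Real.cos a)) ^ 2) :=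
  integral_gFun_general r hr₁ hr₂ a b
end

section
/- The quantity φ₃ = 2/3 + (3/(4π²))·(arccos((1/2)·cos(2π/3))² − arccos(1/2)²) = 2/3 + (3/(4π²))·(arccos(−1/4)² − (π/3)²) satisfies φ₃ > 0.836. -/
open Real

lemma sin_small_bound : Real.sin (0.252665 : ℝ) ≤ 1 / 4 := by
  have ht1 : |(0.06316625 : ℝ)| ≤ 1 := by
    rw [abs_of_nonneg (by norm_num)]; norm_num
  have habs : |(0.06316625 : ℝ)| = 0.06316625 := abs_of_nonneg (by norm_num)
  have h1 := abs_le.mp (Real.sin_bound ht1)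
  have h2 := abs_le.mp (Real.cos_bound ht1)
  rw [habs] at h1 h2
  set s := Real.sin (0.06316625 : ℝ) with hs
  set c := Real.cos (0.06316625 : ℝ) with hc
  have hsu : s ≤ 15781268467/250000000000 := by nlinarith [h1.2]
  have hsl : (63123415543/1000000000000 : ℝ) ≤ s := by nlinarith [h1.1]
  have hcu : c ≤ 998005841593/1000000000000 := by nlinarith [h2.2]
  have hcl : (249501045817/250000000000 : ℝ) ≤ c := by nlinarith [h2.1]
  have e1 : (0.252665 : ℝ) = 2 * (2 * 0.06316625) := by norm_num
  rw [e1, Real.sin_two_mul, Real.sin_two_mul, Real.cos_two_mul, ← hs, ← hc]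
  -- bounds on sin(2t) and cos(2t)
  have hsin2u : 2 * s * c ≤ 2 * (15781268467/250000000000) * (998005841593/1000000000000) := by
    nlinarith
  have hsin2l : (0 : ℝ) ≤ 2 * s * c := by nlinarith
  have hcos2u : 2 * c ^ 2 - 1 ≤ 2 * (998005841593/1000000000000 : ℝ) ^ 2 - 1 := by
    nlinarith
  have hcos2l : (0 : ℝ) ≤ 2 * c ^ 2 - 1 := by nlinarith
  nlinarith [mul_le_mul hsin2u hcos2u hcos2l (by norm_num)]

lemma arcsin_quarter_lb : (0.252665 : ℝ) ≤ Real.arcsin (1 / 4) := by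
  have hπ := Real.pi_gt_d6
  have h := Real.monotone_arcsin sin_small_bound
  have he : Real.arcsin (Real.sin (0.252665 : ℝ)) = 0.252665 :=
    Real.arcsin_sin (by norm_num; linarith) (by linarith)
  linarith [he ▸ h]

/-- The Max-3-Cut guarantee `φ₃` exceeds `0.836`. -/
theorem phi_three_gt : (2 : ℝ) / 3 +
    3 / (4 * π ^ 2) *
      ((Real.arccos ((1 / 2) * Real.cos (2 * π / 3))) ^ 2 -
        (Real.arccos (1 / 2)) ^ 2) > 0.836 := by
  have hπl := Real.pi_gt_d6
  have hπu := Real.pi_lt_d6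
  have hπ : (0 : ℝ) < π := Real.pi_pos
  have hcos : Real.cos (2 * π / 3) = -(1/2) := by
    have : (2 * π / 3 : ℝ) = π - π / 3 := by ring
    rw [this, Real.cos_pi_sub, Real.cos_pi_div_three]
  have harg : ((1:ℝ)/2) * Real.cos (2 * π / 3) = -(1/4) := by rw [hcos]; norm_num
  have hA : Real.arccos ((1/2) * Real.cos (2 * π / 3)) = π/2 + Real.arcsin (1/4) := by
    rw [harg, Real.arccos_eq_pi_div_two_sub_arcsin, Real.arcsin_neg]; ring
  have hB : Real.arccos (1/2 : ℝ) = π / 3 := by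
    rw [← Real.cos_pi_div_three, Real.arccos_cos (by positivity) (by linarith)]
  rw [hA, hB]
  set s := Real.arcsin (1/4 : ℝ) with hsdef
  have hs : (0.252665 : ℝ) ≤ s := arcsin_quarter_lb
  have h4 : (0 : ℝ) < 4 * π ^ 2 := by positivity
  have key : (0.836 - 2/3 : ℝ) * (4 * π ^ 2) < 3 * ((π/2 + s)^2 - (π/3)^2) := by
    nlinarith [mul_nonneg (by linarith : (0:ℝ) ≤ π - 3.141592)
      (by linarith : (0:ℝ) ≤ s - 0.252665), sq_nonneg (π - 3.141593), sq_nonneg (s - 0.252665)]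
  have h5 : (0.836 - 2/3 : ℝ) < 3 / (4 * π ^ 2) * ((π/2 + s)^2 - (π/3)^2) := by
    rw [div_mul_eq_mul_div, lt_div_iff₀ h4]
    linarith
  linarith
end
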